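/- Define f₀, f₁, f₂ : ℂ² → ℂ³ by f₀(z,w) = (z², √2·zw, w²), f₁(z,w) = (−√2·z·conj w, z·conj z − w·conj w, √2·w·conj z), f₂(z,w) = ((conj w)², −√2·conj z·conj w, (conj z)²). For p = (z,w) ∈ ℂ² set v₁ = (iz, iw), v₂ = (−conj w, conj z), v₃ = (−i·conj w, i·conj z). Then for every p ∈ ℂ²: Df₀(p)[v₁] = 2i·f₀(p), Df₀(p)[v₂] = √2·f₁(p), Df₀(p)[v₃] = √2·i·f₁(p); Df₁(p)[v₁] = 0, Df₁(p)[v₂] = √2·(f₂(p) − f₀(p)), Df₁(p)[v₃] = √2·i·(f₂(p) + f₀(p)); Df₂(p)[v₁] = −2i·f₂(p), Df₂(p)[v₂] = −√2·f₁(p), Df₂(p)[v₃] = √2·i·f₁(p). -/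

import Mathlib

open Matrix

/-- An element of `ℂ³` given by coordinates. -/
noncomputable def vecE3 (a b c : ℂ) : EuclideanSpace ℂ (Fin 3) :=
  (WithLp.equiv 2 (Fin 3 → ℂ)).symm ![a, b, c]

/-- `f₀(z,w) = (z², √2 zw, w²)`. -/
noncomputable def f₀ (p : ℂ × ℂ) : EuclideanSpace ℂ (Fin 3) :=
  vecE3 (p.1 ^ 2) ((Real.sqrt 2 : ℂ) * p.1 * p.2) (p.2 ^ 2)

/-- `f₁(z,w) = (−√2 z w̄, z z̄ − w w̄, √2 w z̄)`. -/
noncomputable def f₁ (p : ℂ × ℂ) : EuclideanSpace ℂ (Fin 3) :=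
  vecE3 (-((Real.sqrt 2 : ℂ) * p.1 * (starRingEnd ℂ) p.2))
    (p.1 * (starRingEnd ℂ) p.1 - p.2 * (starRingEnd ℂ) p.2)
    ((Real.sqrt 2 : ℂ) * p.2 * (starRingEnd ℂ) p.1)

/-- `f₂(z,w) = (w̄², −√2 z̄ w̄, z̄²)`. -/
noncomputable def f₂ (p : ℂ × ℂ) : EuclideanSpace ℂ (Fin 3) :=
  vecE3 (((starRingEnd ℂ) p.2) ^ 2)
    (-((Real.sqrt 2 : ℂ) * (starRingEnd ℂ) p.1 * (starRingEnd ℂ) p.2))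
    (((starRingEnd ℂ) p.1) ^ 2)

/-! Each `fᵢ` is a real quadratic polynomial in `z, w, z̄, w̄`, so by the product rule its
derivative at `p` in direction `v` is obtained by replacing, in turn, each factor `z, w, z̄, w̄`
of each monomial by `v.1, v.2, v̄.1, v̄.2` and summing. Along `v₁, v₂, v₃` the nine identities are
then polynomial identities modulo `√2 ^ 2 = 2`, `I ^ 2 = -1` and `conj I = -I`. -/

open ComplexConjugate

theorem smul_vecE3 (r a b c : ℂ) : r • vecE3 a b c = vecE3 (r * a) (r * b) (r * c) := by
  ext i; fin_cases i <;> simp [vecE3]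

theorem vecE3_add_vecE3 (a b c a' b' c' : ℂ) :
    vecE3 a b c + vecE3 a' b' c' = vecE3 (a + a') (b + b') (c + c') := by
  ext i; fin_cases i <;> simp [vecE3]

theorem vecE3_sub_vecE3 (a b c a' b' c' : ℂ) :
    vecE3 a b c - vecE3 a' b' c' = vecE3 (a - a') (b - b') (c - c') := by
  ext i; fin_cases i <;> simp [vecE3]

theorem vecE3_zero : vecE3 0 0 0 = 0 := by
  ext i; fin_cases i <;> simp [vecE3]

section Calculus

variable {E : Type*} [NormedAddCommGroup E] [NormedSpace ℝ E] {p : E}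

theorem fderiv_conj_apply {f : E → ℂ} (hf : DifferentiableAt ℝ f p) (v : E) :
    fderiv ℝ (fun q => conj (f q)) p v = conj (fderiv ℝ f p v) :=
  congrArg (· v) ((Complex.conjCLE.hasFDerivAt.comp p hf.hasFDerivAt).fderiv)

theorem fderiv_vecE3_apply {a b c : E → ℂ} (ha : DifferentiableAt ℝ a p)
    (hb : DifferentiableAt ℝ b p) (hc : DifferentiableAt ℝ c p) (v : E) :
    fderiv ℝ (fun q => vecE3 (a q) (b q) (c q)) p v =
      vecE3 (fderiv ℝ a p v) (fderiv ℝ b p v) (fderiv ℝ c p v) := by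
  have hd : HasFDerivAt (fun q => ![a q, b q, c q])
      (ContinuousLinearMap.pi ![fderiv ℝ a p, fderiv ℝ b p, fderiv ℝ c p]) p := by
    refine hasFDerivAt_pi.2 fun i => ?_
    fin_cases i
    exacts [ha.hasFDerivAt, hb.hasFDerivAt, hc.hasFDerivAt]
  rw [show (fun q => vecE3 (a q) (b q) (c q)) = WithLp.toLp 2 ∘ fun q => ![a q, b q, c q]
      from rfl,
    ((PiLp.hasFDerivAt_toLp 2 _).comp p hd).fderiv]
  ext i
  fin_cases i <;> rfl

end Calculus

section Derivatives

variable (p v : ℂ × ℂ)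

theorem fderiv_f₀_apply :
    fderiv ℝ f₀ p v =
      vecE3 (2 * p.1 * v.1) ((Real.sqrt 2 : ℂ) * (v.1 * p.2 + p.1 * v.2)) (2 * p.2 * v.2) := by
  unfold f₀
  rw [fderiv_vecE3_apply (by fun_prop) (by fun_prop) (by fun_prop)]
  congr 1 <;> simp (disch := fun_prop) [fderiv_fun_mul, fderiv_fun_pow, fderiv_fst, fderiv_snd]
  all_goals ring

theorem fderiv_f₁_apply :
    fderiv ℝ f₁ p v = vecE3 (-((Real.sqrt 2 : ℂ) * (v.1 * conj p.2 + p.1 * conj v.2)))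
      (v.1 * conj p.1 + p.1 * conj v.1 - (v.2 * conj p.2 + p.2 * conj v.2))
      ((Real.sqrt 2 : ℂ) * (v.2 * conj p.1 + p.2 * conj v.1)) := by
  unfold f₁
  rw [fderiv_vecE3_apply (by fun_prop) (by fun_prop) (by fun_prop)]
  congr 1 <;>
    simp (disch := fun_prop) [fderiv_fun_sub, fderiv_fun_mul, fderiv_conj_apply, fderiv_fst,
      fderiv_snd]
  all_goals ring

theorem fderiv_f₂_apply :
    fderiv ℝ f₂ p v = vecE3 (2 * conj p.2 * conj v.2)
      (-((Real.sqrt 2 : ℂ) * (conj v.1 * conj p.2 + conj p.1 * conj v.2)))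
      (2 * conj p.1 * conj v.1) := by
  unfold f₂
  rw [fderiv_vecE3_apply (by fun_prop) (by fun_prop) (by fun_prop)]
  congr 1 <;>
    simp (disch := fun_prop) [fderiv_fun_mul, fderiv_fun_pow, fderiv_conj_apply, fderiv_fst,
      fderiv_snd]
  all_goals ring

end Derivatives

/-- Derivative formulas for `f₀, f₁, f₂` along the left-invariant
directions `v₁ = (iz, iw)`, `v₂ = (−w̄, z̄)`, `v₃ = (−i w̄, i z̄)`. -/
theorem f_frame_derivatives (p : ℂ × ℂ) :
    (fderiv ℝ f₀ p (Complex.I * p.1, Complex.I * p.2) = (2 * Complex.I) • f₀ p ∧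
     fderiv ℝ f₀ p (-(starRingEnd ℂ) p.2, (starRingEnd ℂ) p.1)
       = (Real.sqrt 2 : ℂ) • f₁ p ∧
     fderiv ℝ f₀ p (-(Complex.I * (starRingEnd ℂ) p.2), Complex.I * (starRingEnd ℂ) p.1)
       = ((Real.sqrt 2 : ℂ) * Complex.I) • f₁ p) ∧
    (fderiv ℝ f₁ p (Complex.I * p.1, Complex.I * p.2) = 0 ∧
     fderiv ℝ f₁ p (-(starRingEnd ℂ) p.2, (starRingEnd ℂ) p.1)
       = (Real.sqrt 2 : ℂ) • (f₂ p - f₀ p) ∧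
     fderiv ℝ f₁ p (-(Complex.I * (starRingEnd ℂ) p.2), Complex.I * (starRingEnd ℂ) p.1)
       = ((Real.sqrt 2 : ℂ) * Complex.I) • (f₂ p + f₀ p)) ∧
    (fderiv ℝ f₂ p (Complex.I * p.1, Complex.I * p.2) = (-(2 * Complex.I)) • f₂ p ∧
     fderiv ℝ f₂ p (-(starRingEnd ℂ) p.2, (starRingEnd ℂ) p.1)
       = (-(Real.sqrt 2 : ℂ)) • f₁ p ∧
     fderiv ℝ f₂ p (-(Complex.I * (starRingEnd ℂ) p.2), Complex.I * (starRingEnd ℂ) p.1)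
       = ((Real.sqrt 2 : ℂ) * Complex.I) • f₁ p) := by
  have hsqrt : (Real.sqrt 2 : ℂ) ^ 2 = 2 := by
    rw [← Complex.ofReal_pow, Real.sq_sqrt zero_le_two, Complex.ofReal_ofNat]
  simp only [fderiv_f₀_apply, fderiv_f₁_apply, fderiv_f₂_apply, f₀, f₁, f₂, smul_vecE3,
    vecE3_add_vecE3, vecE3_sub_vecE3, ← vecE3_zero]
  refine ⟨⟨?_, ?_, ?_⟩, ⟨?_, ?_, ?_⟩, ⟨?_, ?_, ?_⟩⟩ <;> congr 1 <;>
    grind [Complex.I_sq, Complex.conj_I, Complex.conj_conj]
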